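/- arXiv:2007.07752 — 3 statements merged into one kernel-verified Lean document; each statement's English description precedes it below -/
import Mathlib

section
/- Let f : ℝ → ℝ be the smooth map f(x) = x². There is no smooth manifold P together with smooth maps p_L : P → ℝ and p_R : P → ℝ with f ∘ p_L = f ∘ p_R such that the span (p_L, p_R) is a pullback of the cospan (f, f) in the category of smooth manifolds. Consequently, the category of smooth manifolds and smooth maps does not have pullbacks. -/
open Manifold

/-- A smooth (boundaryless, `C^∞`) manifold: a Hausdorff, second countable topological
space with a smooth atlas modeled on `ℝⁿ` for some `n`. -/
structure SmoothMfld where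
  dim : ℕ
  carrier : Type
  [topology : TopologicalSpace carrier]
  [charts : ChartedSpace (EuclideanSpace ℝ (Fin dim)) carrier]
  [smooth : IsManifold (𝓡 dim) (⊤ : ℕ∞) carrier]
  [t2 : T2Space carrier]
  [secCount : SecondCountableTopology carrier]

attribute [instance] SmoothMfld.topology SmoothMfld.charts SmoothMfld.smooth
  SmoothMfld.t2 SmoothMfld.secCount

/-- The model with corners of a bundled smooth manifold. -/
noncomputable def SmoothMfld.model (M : SmoothMfld) := 𝓡 M.dim

/-- A smooth map between bundled smooth manifolds. -/
def SmoothMap' (M N : SmoothMfld) (f : M.carrier → N.carrier) : Prop :=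
  ContMDiff M.model N.model (⊤ : ℕ∞) f

/-- The span `(sL, sR)` is a pullback of the cospan `(f, g)` in the category of smooth
manifolds: the square commutes, and every span of smooth maps commuting with `(f, g)`
factors uniquely through it by a smooth map. -/
def IsSmoothPullback (X Y Z S : SmoothMfld) (f : X.carrier → Z.carrier)
    (g : Y.carrier → Z.carrier) (sL : S.carrier → X.carrier) (sR : S.carrier → Y.carrier) :
    Prop :=
  SmoothMap' S X sL ∧ SmoothMap' S Y sR ∧ f ∘ sL = g ∘ sR ∧
    ∀ (Q : SmoothMfld) (qL : Q.carrier → X.carrier) (qR : Q.carrier → Y.carrier),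
      SmoothMap' Q X qL → SmoothMap' Q Y qR → f ∘ qL = g ∘ qR →
      ∃! φ : Q.carrier → S.carrier, SmoothMap' Q S φ ∧ sL ∘ φ = qL ∧ sR ∘ φ = qR

/-!
Suppose `(P, pL, pR)` were a pullback. Testing the universal property against the point shows
that `P` has a single point `p₀` over `(0, 0)`, so `pL` and `pR` vanish nowhere else; testing it
against the line gives continuous lifts `γ` of the diagonal `t ↦ (t, t)` and `δ` of the
antidiagonal `t ↦ (t, -t)`, both through `p₀`. Near `p₀` the manifold `P` looks like a ball
in `ℝⁿ`, and a punctured ball is the union of at most two preconnected sets, on each of which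
`pL` and `pR` have constant sign. Yet for small `t > 0` the punctured neighbourhood contains
`γ t`, `γ (-t)` and `δ t`, at which `(pL, pR)` has three different sign patterns.

For the second claim, the pullback of squaring on `EuclideanSpace ℝ (Fin 1)` is transported
to `ℝ`.
-/
open Set Filter Topology

theorem IsPreconnected.mul_pos_of_ne_zero {α : Type*} [TopologicalSpace α] {C : Set α}
    (hC : IsPreconnected C) {f : α → ℝ} (hf : ContinuousOn f C) (h0 : ∀ x ∈ C, f x ≠ 0)
    {x y : α} (hx : x ∈ C) (hy : y ∈ C) : 0 < f x * f y := by
  by_contra! hxy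
  obtain ⟨z, hz, hz0⟩ : (0 : ℝ) ∈ f '' C := by
    rcases mul_nonpos_iff.1 hxy with h | h
    · exact hC.intermediate_value hy hx hf ⟨h.2, h.1⟩
    · exact hC.intermediate_value hx hy hf h
  exact h0 z hz hz0

theorem exists_isPreconnected_union_eq_compl_singleton (E : Type*) [NormedAddCommGroup E]
    [NormedSpace ℝ E] (u : E) :
    ∃ A B : Set E, IsPreconnected A ∧ IsPreconnected B ∧ A ∪ B = {u}ᶜ := by
  rcases le_or_gt (Module.rank ℝ E) 1 with hrank | hrank
  · obtain ⟨v, hv⟩ := rank_le_one_iff.1 hrank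
    rcases eq_or_ne v 0 with rfl | hv0
    · have : Subsingleton E := ⟨fun x y => by
        obtain ⟨r, rfl⟩ := hv x; obtain ⟨s, rfl⟩ := hv y; simp⟩
      exact ⟨{u}ᶜ, ∅, subsingleton_of_subsingleton.isPreconnected, isPreconnected_empty,
        union_empty _⟩
    have hray : ∀ I : Set ℝ, IsPreconnected I →
        IsPreconnected ((fun r : ℝ => u + r • v) '' I) :=
      fun I hI => hI.image _ (by fun_prop)
    refine ⟨_, _, hray _ (isPreconnected_Iio (a := 0)), hray _ (isPreconnected_Ioi (a := 0)), ?_⟩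
    ext x
    obtain ⟨r, hr⟩ := hv (x - u)
    obtain rfl : x = u + r • v := by rw [hr]; abel
    simp [hv0, ← image_union, Iio_union_Ioi]
  · exact ⟨_, _, (isConnected_compl_singleton_of_one_lt_rank hrank u).isPreconnected,
      isPreconnected_empty, union_empty _⟩

open OpenPartialHomeomorph in
theorem ChartedSpace.exists_isPreconnected_union_eq_punctured_nhds {E M : Type*}
    [NormedAddCommGroup E] [NormedSpace ℝ E] [TopologicalSpace M] [ChartedSpace E M] (x : M) :
    ∃ A B : Set M, IsPreconnected A ∧ IsPreconnected B ∧ x ∉ A ∪ B ∧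
      insert x (A ∪ B) ∈ 𝓝 x := by
  set χ := chartAt E x
  obtain ⟨r, hr, hball⟩ :=
    Metric.isOpen_iff.1 χ.open_target (χ x) (χ.map_source (mem_chart_source E x))
  set h : OpenPartialHomeomorph E M := (univBall (χ x) r).trans χ.symm
  have hsrc : h.source = univ := by
    have : range (univBall (χ x) r) ⊆ χ.target := by
      rwa [← image_univ, ← univBall_source (χ x) r, image_source_eq_target, univBall_target _ hr]
    simpa [h, univBall_source]
  have h0 : h 0 = x := by simp [h, univBall_apply_zero, χ]
  obtain ⟨A, B, hA, hB, hAB⟩ := exists_isPreconnected_union_eq_compl_singleton E 0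
  have hcont : ContinuousOn h univ := hsrc ▸ h.continuousOn
  refine ⟨h '' A, h '' B, hA.image _ (hcont.mono (subset_univ _)),
    hB.image _ (hcont.mono (subset_univ _)), ?_, ?_⟩
  · rw [← image_union, hAB]
    rintro ⟨y, hy, hyx⟩
    exact hy (h.injOn (by simp [hsrc]) (by simp [hsrc]) (hyx.trans h0.symm))
  · rw [← image_union, hAB, ← h0, ← image_insert_eq, insert_eq, union_compl_self, ← hsrc,
      h.image_source_eq_target]
    exact h.open_target.mem_nhds (h.map_source (by simp [hsrc]))

theorem ChartedSpace.exists_mem_nhds_same_sign_of_three {E M : Type*} [NormedAddCommGroup E]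
    [NormedSpace ℝ E] [TopologicalSpace M] [ChartedSpace E M] {pL pR : M → ℝ}
    (hpL : Continuous pL) (hpR : Continuous pR) {p₀ : M} (hne : ∀ p ≠ p₀, pL p ≠ 0 ∧ pR p ≠ 0) :
    ∃ N ∈ 𝓝 p₀, ∀ x ∈ N \ {p₀}, ∀ y ∈ N \ {p₀}, ∀ z ∈ N \ {p₀},
      (0 < pL x * pL y ∧ 0 < pR x * pR y) ∨ (0 < pL x * pL z ∧ 0 < pR x * pR z) ∨
        (0 < pL y * pL z ∧ 0 < pR y * pR z) := by
  obtain ⟨A, B, hA, hB, hp₀AB, hN⟩ := exists_isPreconnected_union_eq_punctured_nhds (E := E) p₀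
  have hsign : ∀ C, IsPreconnected C → C ⊆ A ∪ B → ∀ x ∈ C, ∀ y ∈ C,
      0 < pL x * pL y ∧ 0 < pR x * pR y := fun C hC hCAB x hx y hy =>
    have hC₀ : ∀ z ∈ C, z ≠ p₀ := fun z hz h => hp₀AB (h ▸ hCAB hz)
    ⟨hC.mul_pos_of_ne_zero hpL.continuousOn (fun z hz => (hne z (hC₀ z hz)).1) hx hy,
      hC.mul_pos_of_ne_zero hpR.continuousOn (fun z hz => (hne z (hC₀ z hz)).2) hx hy⟩
  have hsignA := hsign A hA subset_union_left
  have hsignB := hsign B hB subset_union_right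
  refine ⟨_, hN, fun x hx y hy z hz => ?_⟩
  have hmem : ∀ w ∈ insert p₀ (A ∪ B) \ {p₀}, w ∈ A ∨ w ∈ B := fun w hw => hw.1.resolve_left hw.2
  rcases hmem x hx with hx | hx <;> rcases hmem y hy with hy | hy <;>
    rcases hmem z hz with hz | hz
  all_goals first
    | exact Or.inl (hsignA x hx y hy) | exact Or.inl (hsignB x hx y hy)
    | exact Or.inr (Or.inl (hsignA x hx z hz)) | exact Or.inr (Or.inl (hsignB x hx z hz))
    | exact Or.inr (Or.inr (hsignA y hy z hz)) | exact Or.inr (Or.inr (hsignB y hy z hz))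

theorem false_of_lift_diagonal_of_lift_antidiagonal {E M : Type*} [NormedAddCommGroup E]
    [NormedSpace ℝ E] [TopologicalSpace M] [ChartedSpace E M] {pL pR : M → ℝ}
    (hpL : Continuous pL) (hpR : Continuous pR) (hsq : ∀ p, pL p ^ 2 = pR p ^ 2)
    (hzero : {p | pL p = 0 ∧ pR p = 0}.Subsingleton) {γ δ : ℝ → M}
    (hγ : Continuous γ) (hδ : Continuous δ) (hγL : ∀ t, pL (γ t) = t) (hγR : ∀ t, pR (γ t) = t)
    (hδL : ∀ t, pL (δ t) = t) (hδR : ∀ t, pR (δ t) = -t) : False := by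
  set p₀ := γ 0
  have hp₀ : pL p₀ = 0 ∧ pR p₀ = 0 := ⟨hγL 0, hγR 0⟩
  have hδ₀ : δ 0 = p₀ := hzero ⟨hδL 0, by simp [hδR]⟩ hp₀
  have hne : ∀ p ≠ p₀, pL p ≠ 0 ∧ pR p ≠ 0 := by
    intro p hp
    have hLR : pL p = 0 ↔ pR p = 0 := by
      rw [← pow_eq_zero_iff two_ne_zero, hsq, pow_eq_zero_iff two_ne_zero]
    have : ¬ (pL p = 0 ∧ pR p = 0) := fun h => hp (hzero h hp₀)
    tauto
  obtain ⟨N, hN, hN3⟩ := ChartedSpace.exists_mem_nhds_same_sign_of_three (E := E) hpL hpR hne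
  have hev : ∀ᶠ t in 𝓝[>] (0 : ℝ), γ t ∈ N ∧ γ (-t) ∈ N ∧ δ t ∈ N := by
    refine Filter.Eventually.filter_mono nhdsWithin_le_nhds ?_
    refine ((hγ.tendsto 0).eventually_mem hN).and (.and ?_ ?_)
    · exact ((hγ.comp continuous_neg).tendsto' 0 p₀ (by simp [p₀])).eventually_mem hN
    · exact (hδ.tendsto' 0 p₀ hδ₀).eventually_mem hN
  obtain ⟨t, ⟨h₁, h₂, h₃⟩, ht⟩ := (hev.and self_mem_nhdsWithin).exists
  have hoff : ∀ x, pL x = t ∨ pL x = -t → x ≠ p₀ := by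
    rintro x hx rfl
    rcases hx with hx | hx <;> linarith [hp₀.1]
  -- the signs of `(pL, pR)` at these three points are `(+, +)`, `(-, -)` and `(+, -)`
  have := hN3 _ ⟨h₁, hoff _ (.inl (hγL t))⟩ _ ⟨h₂, hoff _ (.inr (hγL _))⟩
    _ ⟨h₃, hoff _ (.inl (hδL t))⟩
  simp only [hγL, hγR, hδL, hδR] at this
  rcases this with ⟨h, -⟩ | ⟨-, h⟩ | ⟨h, -⟩ <;> nlinarith

noncomputable abbrev SmoothMfld.euclidean (n : ℕ) : SmoothMfld := ⟨n, EuclideanSpace ℝ (Fin n)⟩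

def IsSmoothPullbackOfSq (P : SmoothMfld) (pL pR : P.carrier → ℝ) : Prop :=
  ContMDiff P.model 𝓘(ℝ, ℝ) (⊤ : ℕ∞) pL ∧ ContMDiff P.model 𝓘(ℝ, ℝ) (⊤ : ℕ∞) pR ∧
    (fun x : ℝ => x ^ 2) ∘ pL = (fun x : ℝ => x ^ 2) ∘ pR ∧
    ∀ (Q : SmoothMfld) (qL qR : Q.carrier → ℝ),
      ContMDiff Q.model 𝓘(ℝ, ℝ) (⊤ : ℕ∞) qL → ContMDiff Q.model 𝓘(ℝ, ℝ) (⊤ : ℕ∞) qR →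
      (fun x : ℝ => x ^ 2) ∘ qL = (fun x : ℝ => x ^ 2) ∘ qR →
      ∃! φ : Q.carrier → P.carrier,
        ContMDiff Q.model P.model (⊤ : ℕ∞) φ ∧ pL ∘ φ = qL ∧ pR ∘ φ = qR

noncomputable abbrev euclideanLineEquiv : EuclideanSpace ℝ (Fin 1) ≃L[ℝ] ℝ :=
  PiLp.equivOfUnique 2 ℝ fun _ : Fin 1 => ℝ

namespace IsSmoothPullbackOfSq

variable {P : SmoothMfld} {pL pR : P.carrier → ℝ}

theorem subsingleton_fiber (h : IsSmoothPullbackOfSq P pL pR) (a b : ℝ) :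
    {p | pL p = a ∧ pR p = b}.Subsingleton := by
  rintro p ⟨rfl, rfl⟩ q ⟨hqL, hqR⟩
  have hconst := (h.2.2.2 (.euclidean 0) (fun _ => pL p) (fun _ => pR p) contMDiff_const
    contMDiff_const (funext fun _ => congrFun h.2.2.1 p)).unique
    (y₁ := fun _ => p) (y₂ := fun _ => q) ⟨contMDiff_const, rfl, rfl⟩
    ⟨contMDiff_const, funext fun _ => hqL, funext fun _ => hqR⟩
  exact congrFun hconst 0

theorem exists_continuous_lift (h : IsSmoothPullbackOfSq P pL pR) {a b : ℝ → ℝ}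
    (ha : ContMDiff 𝓘(ℝ, ℝ) 𝓘(ℝ, ℝ) (⊤ : ℕ∞) a) (hb : ContMDiff 𝓘(ℝ, ℝ) 𝓘(ℝ, ℝ) (⊤ : ℕ∞) b)
    (hab : ∀ t, a t ^ 2 = b t ^ 2) :
    ∃ γ : ℝ → P.carrier, Continuous γ ∧ pL ∘ γ = a ∧ pR ∘ γ = b := by
  have he := euclideanLineEquiv.toContinuousLinearMap.contMDiff (n := (⊤ : ℕ∞))
  obtain ⟨φ, ⟨hφ, hφL, hφR⟩, -⟩ := h.2.2.2 (.euclidean 1) (a ∘ euclideanLineEquiv)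
    (b ∘ euclideanLineEquiv) (ha.comp he) (hb.comp he) (funext fun x => hab _)
  refine ⟨φ ∘ euclideanLineEquiv.symm, hφ.continuous.comp euclideanLineEquiv.symm.continuous,
    ?_, ?_⟩
  · rw [← Function.comp_assoc, hφL, Function.comp_assoc, euclideanLineEquiv.self_comp_symm,
      Function.comp_id]
  · rw [← Function.comp_assoc, hφR, Function.comp_assoc, euclideanLineEquiv.self_comp_symm,
      Function.comp_id]

theorem false (h : IsSmoothPullbackOfSq P pL pR) : False := by
  obtain ⟨γ, hγ, hγL, hγR⟩ := h.exists_continuous_lift contMDiff_id contMDiff_id fun _ => rfl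
  obtain ⟨δ, hδ, hδL, hδR⟩ :=
    h.exists_continuous_lift contMDiff_id contMDiff_id.neg fun _ => by simp
  exact false_of_lift_diagonal_of_lift_antidiagonal (E := EuclideanSpace ℝ (Fin P.dim))
    h.1.continuous h.2.1.continuous (congrFun h.2.2.1) (h.subsingleton_fiber 0 0) hγ hδ
    (congrFun hγL) (congrFun hγR) (congrFun hδL) (congrFun hδR)

end IsSmoothPullbackOfSq

noncomputable def sqEuclideanLine : EuclideanSpace ℝ (Fin 1) → EuclideanSpace ℝ (Fin 1) :=
  euclideanLineEquiv.symm ∘ (fun x : ℝ => x ^ 2) ∘ euclideanLineEquiv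

theorem contMDiff_sqEuclideanLine : SmoothMap' (.euclidean 1) (.euclidean 1) sqEuclideanLine :=
  euclideanLineEquiv.symm.toContinuousLinearMap.contMDiff.comp
    ((contMDiff_id.pow 2).comp euclideanLineEquiv.toContinuousLinearMap.contMDiff)

theorem IsSmoothPullback.isSmoothPullbackOfSq {P : SmoothMfld}
    {pL pR : P.carrier → EuclideanSpace ℝ (Fin 1)}
    (h : IsSmoothPullback (.euclidean 1) (.euclidean 1) (.euclidean 1) P sqEuclideanLine
      sqEuclideanLine pL pR) :
    IsSmoothPullbackOfSq P (euclideanLineEquiv ∘ pL) (euclideanLineEquiv ∘ pR) := by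
  set e := euclideanLineEquiv
  obtain ⟨hL, hR, hcomm, hup⟩ := h
  have he : ContMDiff (𝓡 1) 𝓘(ℝ, ℝ) (⊤ : ℕ∞) e := e.toContinuousLinearMap.contMDiff
  have he' : ContMDiff 𝓘(ℝ, ℝ) (𝓡 1) (⊤ : ℕ∞) e.symm := e.symm.toContinuousLinearMap.contMDiff
  refine ⟨he.comp hL, he.comp hR, e.symm.injective.comp_left hcomm,
    fun Q qL qR hqL hqR hq => ?_⟩
  have hlift : ∀ (p : P.carrier → EuclideanSpace ℝ (Fin 1)) (φ : Q.carrier → P.carrier)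
      (q : Q.carrier → ℝ), p ∘ φ = e.symm ∘ q ↔ (e ∘ p) ∘ φ = q := fun p φ q =>
    e.toLinearEquiv.eq_symm_comp _ _
  have hsq : sqEuclideanLine ∘ e.symm ∘ qL = sqEuclideanLine ∘ e.symm ∘ qR := by
    change e.symm ∘ (· ^ 2) ∘ (e ∘ e.symm) ∘ qL = e.symm ∘ (· ^ 2) ∘ (e ∘ e.symm) ∘ qR
    rw [e.self_comp_symm]
    exact congrArg (e.symm ∘ ·) hq
  simpa only [hlift, SmoothMap'] using
    hup Q (e.symm ∘ qL) (e.symm ∘ qR) (he'.comp hqL) (he'.comp hqR) hsq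

/-- The cospan `(x ↦ x², x ↦ x²)` on `ℝ` has no pullback in the category of smooth
manifolds; consequently, the category of smooth manifolds does not have pullbacks. -/
theorem stmt3 :
    (¬ ∃ (P : SmoothMfld) (pL pR : P.carrier → ℝ),
      ContMDiff P.model 𝓘(ℝ, ℝ) (⊤ : ℕ∞) pL ∧ ContMDiff P.model 𝓘(ℝ, ℝ) (⊤ : ℕ∞) pR ∧
      (fun x : ℝ => x ^ 2) ∘ pL = (fun x : ℝ => x ^ 2) ∘ pR ∧
      ∀ (Q : SmoothMfld) (qL qR : Q.carrier → ℝ),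
        ContMDiff Q.model 𝓘(ℝ, ℝ) (⊤ : ℕ∞) qL → ContMDiff Q.model 𝓘(ℝ, ℝ) (⊤ : ℕ∞) qR →
        (fun x : ℝ => x ^ 2) ∘ qL = (fun x : ℝ => x ^ 2) ∘ qR →
        ∃! φ : Q.carrier → P.carrier,
          ContMDiff Q.model P.model (⊤ : ℕ∞) φ ∧ pL ∘ φ = qL ∧ pR ∘ φ = qR) ∧
    ¬ ∀ (X Y Z : SmoothMfld) (f : X.carrier → Z.carrier) (g : Y.carrier → Z.carrier),
        SmoothMap' X Z f → SmoothMap' Y Z g →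
        ∃ (P : SmoothMfld) (pL : P.carrier → X.carrier) (pR : P.carrier → Y.carrier),
          IsSmoothPullback X Y Z P f g pL pR := by
  have hno : ¬ ∃ (P : SmoothMfld) (pL pR : P.carrier → ℝ), IsSmoothPullbackOfSq P pL pR :=
    fun ⟨_, _, _, h⟩ => h.false
  refine ⟨hno, fun H => hno ?_⟩
  obtain ⟨P, pL, pR, h⟩ := H _ _ _ _ _ contMDiff_sqEuclideanLine contMDiff_sqEuclideanLine
  exact ⟨P, _, _, h.isSmoothPullbackOfSq⟩
end

section
/- Let F : C → C' be a span tight functor. For i = 1, 2 let Sⁱ and Qⁱ be spans in C with Sⁱ_R = Qⁱ_L, and let Sⁱ ∘_{Pⁱ} Qⁱ be an F-pullback composite along an F-pullback Pⁱ of the cospan (sⁱ_R, qⁱ_L). If S¹ is span isomorphic to S² and Q¹ is span isomorphic to Q², then S¹ ∘_{P¹} Q¹ is span isomorphic to S² ∘_{P²} Q². -/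
open CategoryTheory

universe v u v' u'

/-- A span in `C` with left foot `L` and right foot `R`. -/
structure Span' (C : Type u) [Category.{v} C] (L R : C) where
  apex : C
  left : apex ⟶ L
  right : apex ⟶ R

/-- A cospan in `C` with left foot `L` and right foot `R`. -/
structure Cospan' (C : Type u) [Category.{v} C] (L R : C) where
  coapex : C
  left : L ⟶ coapex
  right : R ⟶ coapex

variable {C : Type u} [Category.{v} C] {C' : Type u'} [Category.{v'} C']

/-- A span is paired with a cospan with the same feet if the resulting square commutes. -/
def PairedWith {L R : C} (S : Span' C L R) (c : Cospan' C L R) : Prop :=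
  S.left ≫ c.left = S.right ≫ c.right

/-- A span morphism between spans with the same feet. -/
def IsSpanMorphism {L R : C} (S Q : Span' C L R) (Φ : S.apex ⟶ Q.apex) : Prop :=
  Φ ≫ Q.left = S.left ∧ Φ ≫ Q.right = S.right

/-- A span isomorphism is a span morphism that is an isomorphism. -/
def IsSpanIso {L R : C} (S Q : Span' C L R) (Φ : S.apex ⟶ Q.apex) : Prop :=
  IsSpanMorphism S Q Φ ∧ IsIso Φ

/-- Two spans are span isomorphic if there is a span isomorphism between them. -/
def SpanIsomorphic {L R : C} (S Q : Span' C L R) : Prop :=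
  ∃ Φ : S.apex ⟶ Q.apex, IsSpanIso S Q Φ

/-- A span `S` is a pullback of a cospan `c` if it is paired with `c` and every span paired
with `c` admits a unique span morphism to `S`. -/
def IsPullbackSpan {L R : C} (S : Span' C L R) (c : Cospan' C L R) : Prop :=
  PairedWith S c ∧ ∀ Q : Span' C L R, PairedWith Q c → ∃! Φ : Q.apex ⟶ S.apex, IsSpanMorphism Q S Φ

/-- The image of a span under a functor. -/
def Span'.map (F : C ⥤ C') {L R : C} (S : Span' C L R) : Span' C' (F.obj L) (F.obj R) :=
  ⟨F.obj S.apex, F.map S.left, F.map S.right⟩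

/-- The image of a cospan under a functor. -/
def Cospan'.map (F : C ⥤ C') {L R : C} (c : Cospan' C L R) : Cospan' C' (F.obj L) (F.obj R) :=
  ⟨F.obj c.coapex, F.map c.left, F.map c.right⟩

/-- A span `S` in `C` is an `F`-pullback of a cospan `c` in `C` if `S` is paired with `c` and
`F(S)` is a pullback of `F(c)` in `C'`. -/
def IsFPullback (F : C ⥤ C') {L R : C} (S : Span' C L R) (c : Cospan' C L R) : Prop :=
  PairedWith S c ∧ IsPullbackSpan (S.map F) (c.map F)

/-- `C` has `F`-pullbacks in `C'`. -/
def HasFPullbacks (F : C ⥤ C') : Prop :=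
  ∀ {L R : C} (c : Cospan' C L R), ∃ S : Span' C L R, IsFPullback F S c

/-- `F` is span tight: `C` has `F`-pullbacks in `C'` and every span isomorphism in `C'`
between the images of two `F`-pullbacks of the same cospan lifts to a span isomorphism in `C`. -/
def SpanTight (F : C ⥤ C') : Prop :=
  HasFPullbacks F ∧ ∀ {L R : C} (c : Cospan' C L R) (S Q : Span' C L R),
    IsFPullback F S c → IsFPullback F Q c →
    ∀ Φ : (S.map F).apex ⟶ (Q.map F).apex, IsSpanIso (S.map F) (Q.map F) Φ →
      ∃ Ψ : S.apex ⟶ Q.apex, IsSpanIso S Q Ψ ∧ F.map Ψ = Φ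

/-- The cospan `(s_R, q_L)` associated to two composable spans. -/
def compCospan {L M R : C} (S : Span' C L M) (Q : Span' C M R) : Cospan' C S.apex Q.apex :=
  ⟨M, S.right, Q.left⟩

/-- The composite of the spans `S` and `Q` along a span `P` paired with `(s_R, q_L)`. -/
def compositeAlong {L M R : C} (S : Span' C L M) (Q : Span' C M R)
    (P : Span' C S.apex Q.apex) : Span' C L R :=
  ⟨P.apex, P.left ≫ S.left, P.right ≫ Q.right⟩

/-- The identity span on an object. -/
def idSpan (X : C) : Span' C X X := ⟨X, 𝟙 X, 𝟙 X⟩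

/-!
Post-composing `P¹` with the span isomorphisms `S¹ ≅ S²`, `Q¹ ≅ Q²` yields an `F`-pullback of
the cospan `(s²_R, q²_L)`. Its image under `F` and `F(P²)` are then pullbacks of the same cospan,
hence span isomorphic; span tightness lifts this isomorphism to `C`, and any span isomorphism
from the transported `P¹` to `P²` is one between the composites.
-/

def Span'.postcomp {L R L' R' : C} (S : Span' C L R) (α : L ⟶ L') (β : R ⟶ R') :
    Span' C L' R' :=
  ⟨S.apex, S.left ≫ α, S.right ≫ β⟩

theorem Span'.map_postcomp (F : C ⥤ C') {L R L' R' : C} (S : Span' C L R)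
    (α : L ⟶ L') (β : R ⟶ R') :
    (S.postcomp α β).map F = (S.map F).postcomp (F.map α) (F.map β) := by
  simp only [Span'.postcomp, Span'.map, Functor.map_comp]

theorem IsSpanMorphism.id {L R : C} (S : Span' C L R) : IsSpanMorphism S S (𝟙 S.apex) :=
  ⟨Category.id_comp _, Category.id_comp _⟩

theorem IsSpanMorphism.comp {L R : C} {S Q T : Span' C L R} {Φ : S.apex ⟶ Q.apex}
    {Ψ : Q.apex ⟶ T.apex} (hΦ : IsSpanMorphism S Q Φ) (hΨ : IsSpanMorphism Q T Ψ) :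
    IsSpanMorphism S T (Φ ≫ Ψ) :=
  ⟨by rw [Category.assoc, hΨ.1, hΦ.1], by rw [Category.assoc, hΨ.2, hΦ.2]⟩

namespace IsPullbackSpan

variable {L R : C} {S Q : Span' C L R} {c : Cospan' C L R}

theorem eq_id_of_isSpanMorphism (hS : IsPullbackSpan S c) {Φ : S.apex ⟶ S.apex}
    (hΦ : IsSpanMorphism S S Φ) : Φ = 𝟙 S.apex :=
  (hS.2 S hS.1).unique hΦ (IsSpanMorphism.id S)

theorem spanIsomorphic (hS : IsPullbackSpan S c) (hQ : IsPullbackSpan Q c) :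
    SpanIsomorphic S Q := by
  obtain ⟨Φ, hΦ, -⟩ := hQ.2 S hS.1
  obtain ⟨Ψ, hΨ, -⟩ := hS.2 Q hQ.1
  exact ⟨Φ, hΦ, ⟨Ψ, hS.eq_id_of_isSpanMorphism (hΦ.comp hΨ),
    hQ.eq_id_of_isSpanMorphism (hΨ.comp hΦ)⟩⟩

end IsPullbackSpan

section Transport

variable {L R L' R' X : C} {f : L ⟶ X} {g : R ⟶ X} {f' : L' ⟶ X} {g' : R' ⟶ X}
  {α : L ⟶ L'} {β : R ⟶ R'}

theorem PairedWith.postcomp {S : Span' C L R} (hS : PairedWith S ⟨X, f, g⟩)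
    (hf : α ≫ f' = f) (hg : β ≫ g' = g) :
    PairedWith (S.postcomp α β) ⟨X, f', g'⟩ := by
  simpa only [PairedWith, Span'.postcomp, Category.assoc, hf, hg] using hS

theorem IsPullbackSpan.postcomp [IsIso α] [IsIso β] {S : Span' C L R}
    (hS : IsPullbackSpan S ⟨X, f, g⟩) (hf : α ≫ f' = f) (hg : β ≫ g' = g) :
    IsPullbackSpan (S.postcomp α β) ⟨X, f', g'⟩ := by
  refine ⟨hS.1.postcomp hf hg, fun Q hQ => ?_⟩
  have hQ' : PairedWith (Q.postcomp (inv α) (inv β)) ⟨X, f, g⟩ :=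
    hQ.postcomp (by rw [← hf, IsIso.inv_hom_id_assoc]) (by rw [← hg, IsIso.inv_hom_id_assoc])
  have hmor : ∀ Φ : Q.apex ⟶ S.apex, IsSpanMorphism Q (S.postcomp α β) Φ ↔
      IsSpanMorphism (Q.postcomp (inv α) (inv β)) S Φ := by
    intro Φ
    simp only [IsSpanMorphism, Span'.postcomp, ← Category.assoc, ← IsIso.eq_comp_inv]
  exact (existsUnique_congr hmor).2 (hS.2 _ hQ')

theorem IsFPullback.postcomp (F : C ⥤ C') [IsIso α] [IsIso β] {S : Span' C L R}
    (hS : IsFPullback F S ⟨X, f, g⟩) (hf : α ≫ f' = f) (hg : β ≫ g' = g) :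
    IsFPullback F (S.postcomp α β) ⟨X, f', g'⟩ := by
  refine ⟨hS.1.postcomp hf hg, ?_⟩
  rw [Span'.map_postcomp]
  exact IsPullbackSpan.postcomp hS.2 (by rw [← F.map_comp, hf]) (by rw [← F.map_comp, hg])

end Transport

theorem isSpanMorphism_compositeAlong {L M R : C} {S1 S2 : Span' C L M} {Q1 Q2 : Span' C M R}
    {P1 : Span' C S1.apex Q1.apex} {P2 : Span' C S2.apex Q2.apex}
    {φS : S1.apex ⟶ S2.apex} {φQ : Q1.apex ⟶ Q2.apex} {Ψ : P1.apex ⟶ P2.apex}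
    (hφS : IsSpanMorphism S1 S2 φS) (hφQ : IsSpanMorphism Q1 Q2 φQ)
    (hΨ : IsSpanMorphism (P1.postcomp φS φQ) P2 Ψ) :
    IsSpanMorphism (compositeAlong S1 Q1 P1) (compositeAlong S2 Q2 P2) Ψ := by
  constructor
  · change Ψ ≫ P2.left ≫ S2.left = P1.left ≫ S1.left
    rw [← Category.assoc, show Ψ ≫ P2.left = P1.left ≫ φS from hΨ.1, Category.assoc, hφS.1]
  · change Ψ ≫ P2.right ≫ Q2.right = P1.right ≫ Q1.right
    rw [← Category.assoc, show Ψ ≫ P2.right = P1.right ≫ φQ from hΨ.2, Category.assoc, hφQ.2]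

/-- `F`-pullback composites of span isomorphic spans are span isomorphic. -/
theorem stmt8 (F : C ⥤ C') (hF : SpanTight F) {L M R : C}
    (S1 S2 : Span' C L M) (Q1 Q2 : Span' C M R)
    (P1 : Span' C S1.apex Q1.apex) (P2 : Span' C S2.apex Q2.apex)
    (hP1 : IsFPullback F P1 (compCospan S1 Q1)) (hP2 : IsFPullback F P2 (compCospan S2 Q2))
    (hS : SpanIsomorphic S1 S2) (hQ : SpanIsomorphic Q1 Q2) :
    SpanIsomorphic (compositeAlong S1 Q1 P1) (compositeAlong S2 Q2 P2) := by
  obtain ⟨φS, hφS, _⟩ := hS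
  obtain ⟨φQ, hφQ, _⟩ := hQ
  have hP1' : IsFPullback F (P1.postcomp φS φQ) (compCospan S2 Q2) :=
    hP1.postcomp F hφS.2 hφQ.1
  obtain ⟨Φ, hΦ⟩ := hP1'.2.spanIsomorphic hP2.2
  obtain ⟨Ψ, ⟨hΨ, hΨiso⟩, -⟩ := hF.2 _ _ _ hP1' hP2 Φ hΦ
  exact ⟨Ψ, isSpanMorphism_compositeAlong hφS hφQ hΨ, hΨiso⟩
end

section
/- Let F : C → C' be a span tight functor and let S, Q, T be spans in C with S_R = Q_L and Q_R = T_L. Suppose S ∘_{P¹} Q and Q ∘_{P⁴} T are F-pullback composites, and (S ∘_{P¹} Q) ∘_{P²} T and S ∘_{P³} (Q ∘_{P⁴} T) are F-pullback composites. Then (S ∘_{P¹} Q) ∘_{P²} T is span isomorphic in C to S ∘_{P³} (Q ∘_{P⁴} T). -/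
/-!
Choose an `F`-pullback `W` of the cospan `(p¹_R, p⁴_L)`. Pasting the pullback squares
`F(W)`, `F(P⁴)` (vertically) and `F(W)`, `F(P¹)` (horizontally) shows that `W`, with legs
`(w_L, p⁴_R ∘ w_R)`, resp. `(p¹_L ∘ w_L, w_R)`, is an `F`-pullback of the cospan defining `P²`,
resp. `P³`, and the two composites along `W` are the same span
`(s_L ∘ p¹_L ∘ w_L, t_R ∘ p⁴_R ∘ w_R)`. Span tightness lifts the canonical isomorphisms
`F(P²) ≅ F(W) ≅ F(P³)` to span isomorphisms in `C`, and these survive composition.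
-/

open CategoryTheory

universe v u v' u'

variable {C : Type u} [Category.{v} C] {C' : Type u'} [Category.{v'} C']

open Limits

theorem isPullbackSpan_iff {L R : C} (S : Span' C L R) (c : Cospan' C L R) :
    IsPullbackSpan S c ↔ IsPullback S.left S.right c.left c.right := by
  refine ⟨fun ⟨hw, hlim⟩ => ?_, fun h => ⟨h.w, fun Q (hQ : Q.left ≫ c.left = _) => ?_⟩⟩
  · choose lift hlift hlift_uniq using
      fun s : PullbackCone c.left c.right => hlim ⟨s.pt, s.fst, s.snd⟩ s.condition
    exact IsPullback.of_isLimit' ⟨hw⟩ <| PullbackCone.IsLimit.mk hw lift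
      (fun s => (hlift s).1) (fun s => (hlift s).2) fun s m h₁ h₂ => hlift_uniq s m ⟨h₁, h₂⟩
  · refine ⟨h.lift Q.left Q.right hQ, ⟨h.lift_fst .., h.lift_snd ..⟩, fun Φ hΦ => ?_⟩
    exact h.hom_ext (by rw [hΦ.1, h.lift_fst]) (by rw [hΦ.2, h.lift_snd])

theorem isFPullback_iff (F : C ⥤ C') {L R : C} (S : Span' C L R) (c : Cospan' C L R) :
    IsFPullback F S c ↔ CommSq S.left S.right c.left c.right ∧
      IsPullback (F.map S.left) (F.map S.right) (F.map c.left) (F.map c.right) := by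
  rw [IsFPullback, isPullbackSpan_iff, PairedWith]
  exact and_congr_left' ⟨fun h => ⟨h⟩, CommSq.w⟩

theorem IsPullbackSpan.spanIsomorphic_s9 {L R : C} {S Q : Span' C L R} {c : Cospan' C L R}
    (hS : IsPullbackSpan S c) (hQ : IsPullbackSpan Q c) : SpanIsomorphic S Q := by
  rw [isPullbackSpan_iff] at hS hQ
  exact ⟨(hS.isoIsPullback _ _ hQ).hom, ⟨by simp, by simp⟩, inferInstance⟩

theorem SpanTight.spanIsomorphic_s9 {F : C ⥤ C'} (hF : SpanTight F) {L R : C}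
    {S Q : Span' C L R} {c : Cospan' C L R} (hS : IsFPullback F S c) (hQ : IsFPullback F Q c) :
    SpanIsomorphic S Q := by
  obtain ⟨Φ, hΦ⟩ := hS.2.spanIsomorphic_s9 hQ.2
  obtain ⟨Ψ, hΨ, -⟩ := hF.2 c S Q hS hQ Φ hΦ
  exact ⟨Ψ, hΨ⟩

theorem SpanIsomorphic.trans {L R : C} {S Q T : Span' C L R} (hSQ : SpanIsomorphic S Q)
    (hQT : SpanIsomorphic Q T) : SpanIsomorphic S T := by
  obtain ⟨Φ, ⟨hΦl, hΦr⟩, _⟩ := hSQ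
  obtain ⟨Ψ, ⟨hΨl, hΨr⟩, _⟩ := hQT
  exact ⟨Φ ≫ Ψ, ⟨by simp [hΨl, hΦl], by simp [hΨr, hΦr]⟩, inferInstance⟩

theorem SpanIsomorphic.compositeAlong {L M R : C} {S : Span' C L M} {Q : Span' C M R}
    {P P' : Span' C S.apex Q.apex} (h : SpanIsomorphic P P') :
    SpanIsomorphic (compositeAlong S Q P) (compositeAlong S Q P') := by
  obtain ⟨Φ, ⟨hl, hr⟩, hΦ⟩ := h
  exact ⟨Φ, ⟨by simp [_root_.compositeAlong, ← hl], by simp [_root_.compositeAlong, ← hr]⟩, hΦ⟩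

theorem IsFPullback.paste_vert {F : C ⥤ C'} {X Y Z U : C} {f : X ⟶ Y} {g : Y ⟶ Z} {h : U ⟶ Z}
    {P : Span' C Y U} (hP : IsFPullback F P ⟨Z, g, h⟩)
    {W : Span' C X P.apex} (hW : IsFPullback F W ⟨Y, f, P.left⟩) :
    IsFPullback F ⟨W.apex, W.left, W.right ≫ P.right⟩ ⟨Z, f ≫ g, h⟩ := by
  rw [isFPullback_iff] at *
  simpa only [Functor.map_comp] using ⟨hW.1.vert_comp hP.1, hW.2.paste_vert hP.2⟩

theorem IsFPullback.paste_horiz {F : C ⥤ C'} {X Y Z U : C} {g : Y ⟶ Z} {h : U ⟶ Z} {f : X ⟶ U}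
    {P : Span' C Y U} (hP : IsFPullback F P ⟨Z, g, h⟩)
    {W : Span' C P.apex X} (hW : IsFPullback F W ⟨U, P.right, f⟩) :
    IsFPullback F ⟨W.apex, W.left ≫ P.left, W.right⟩ ⟨Z, g, f ≫ h⟩ := by
  rw [isFPullback_iff] at *
  simpa only [Functor.map_comp] using ⟨hW.1.horiz_comp hP.1, hW.2.paste_horiz hP.2⟩

/-- Associativity of `F`-pullback composition up to span isomorphism. -/
theorem stmt9 (F : C ⥤ C') (hF : SpanTight F) {L M1 M2 R : C}
    (S : Span' C L M1) (Q : Span' C M1 M2) (T : Span' C M2 R)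
    (P1 : Span' C S.apex Q.apex) (hP1 : IsFPullback F P1 (compCospan S Q))
    (P4 : Span' C Q.apex T.apex) (hP4 : IsFPullback F P4 (compCospan Q T))
    (P2 : Span' C (compositeAlong S Q P1).apex T.apex)
    (hP2 : IsFPullback F P2 (compCospan (compositeAlong S Q P1) T))
    (P3 : Span' C S.apex (compositeAlong Q T P4).apex)
    (hP3 : IsFPullback F P3 (compCospan S (compositeAlong Q T P4))) :
    SpanIsomorphic (compositeAlong (compositeAlong S Q P1) T P2)
      (compositeAlong S (compositeAlong Q T P4) P3) := by
  obtain ⟨W, hW⟩ := hF.1 (⟨Q.apex, P1.right, P4.left⟩ : Cospan' C P1.apex P4.apex)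
  have hA := hP4.paste_vert hW
  have hB := hP1.paste_horiz hW
  have hAB : compositeAlong (compositeAlong S Q P1) T ⟨W.apex, W.left, W.right ≫ P4.right⟩ =
      compositeAlong S (compositeAlong Q T P4) ⟨W.apex, W.left ≫ P1.left, W.right⟩ := by
    simp [compositeAlong]
  exact (hF.spanIsomorphic_s9 hP2 hA).compositeAlong.trans
    (hAB ▸ (hF.spanIsomorphic_s9 hB hP3).compositeAlong)
end
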